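/- arXiv:2202.10639 — 2 statements merged into one kernel-verified Lean document; each statement's English description precedes it below -/
import Mathlib

section
/- If a sequent consisting entirely of literals and constants (a literal sequent) is classically valid, then it contains ⊤, or it contains some atom p together with its negation ¬p. -/
/-- Propositional formulas in negation normal form over atoms ℕ. -/
inductive Fm : Type
  | pos : ℕ → Fm          -- atom
  | neg : ℕ → Fm          -- negated atom
  | top : Fm
  | bot : Fm
  | and : Fm → Fm → Fm
  | or  : Fm → Fm → Fm
  deriving DecidableEq

/-- Boolean evaluation under a valuation. -/
def Fm.eval (v : ℕ → Bool) : Fm → Bool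
  | .pos n => v n
  | .neg n => !(v n)
  | .top => true
  | .bot => false
  | .and f g => f.eval v && g.eval v
  | .or f g => f.eval v || g.eval v

/-- Literalization of a single formula: ‖F∧G‖ = ⊤, ‖F∨G‖ = ⊥, otherwise unchanged. -/
def Fm.lit : Fm → Fm
  | .and _ _ => Fm.top
  | .or _ _ => Fm.bot
  | f => f

/-- Evaluation of a sequent: disjunction of its members. -/
def seqEval (v : ℕ → Bool) (Γ : List Fm) : Bool := Γ.any (Fm.eval v)

/-- A sequent is valid iff its disjunction is true under every valuation. -/
def seqValid (Γ : List Fm) : Prop := ∀ v, seqEval v Γ = true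

/-- A sequent is stable iff its literalization is classically valid. -/
def stable (Γ : List Fm) : Prop := ∀ v, seqEval v (Γ.map Fm.lit) = true

/-- LKg⁰ provability. -/
inductive Prov : List Fm → Prop
  | succ (Γ : List Fm) :
      (∀ F ∈ Γ, ∀ A B, F ≠ Fm.and A B) → stable Γ → Prov Γ
  | orR (Γ : List Fm) (F G : Fm) :
      Prov (F :: G :: Γ) → Prov (Fm.or F G :: Γ)
  | andR (Γ : List Fm) (F G : Fm) :
      Prov (F :: Γ) → Prov (G :: Γ) → Prov (Fm.and F G :: Γ)

/-- A formula is a literal or constant. -/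
def isLit : Fm → Prop
  | .and _ _ => False
  | .or _ _ => False
  | _ => True

theorem stmt_6 (Γ : List Fm) (hlit : ∀ F ∈ Γ, isLit F)
    (h : seqValid Γ) :
    Fm.top ∈ Γ ∨ ∃ p : ℕ, Fm.pos p ∈ Γ ∧ Fm.neg p ∈ Γ := by
  by_contra hc
  push_neg at hc
  obtain ⟨htop, hpair⟩ := hc
  have := h (fun n => decide (Fm.neg n ∈ Γ))
  rw [seqEval, List.any_eq_true] at this
  obtain ⟨F, hF, hev⟩ := this
  cases F with
  | pos p =>
    simp [Fm.eval] at hev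
    exact hpair p hF hev
  | neg n =>
    simp [Fm.eval] at hev
    exact hev hF
  | top => exact htop hF
  | bot => simp [Fm.eval] at hev
  | and A B => exact hlit _ hF
  | or A B => exact hlit _ hF
end

section
/- Soundness of LKg⁰: every sequent provable in LKg⁰ is classically valid. -/
lemma lit_le (v : ℕ → Bool) (F : Fm) (hF : ∀ A B, F ≠ Fm.and A B) :
    Fm.eval v F.lit = true → Fm.eval v F = true := by
  cases F with
  | and A B => exact absurd rfl (hF A B)
  | or A B => simp [Fm.lit, Fm.eval]
  | _ => simp [Fm.lit]

theorem stmt_10 (Γ : List Fm) (h : Prov Γ) : seqValid Γ := by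
  induction h with
  | succ Γ hno hst =>
    intro v
    have := hst v
    simp only [seqEval, List.any_eq_true] at this ⊢
    obtain ⟨F, hF, hFe⟩ := this
    simp only [List.mem_map] at hF
    obtain ⟨G, hG, rfl⟩ := hF
    exact ⟨G, hG, lit_le v G (hno G hG) hFe⟩
  | orR Γ F G _ ih =>
    intro v
    have := ih v
    simp only [seqEval, List.any_cons, Fm.eval] at this ⊢
    rw [Bool.or_assoc]; exact this
  | andR Γ F G _ _ ihF ihG =>
    intro v
    have h1 := ihF v; have h2 := ihG v
    simp only [seqEval, List.any_cons, Fm.eval, Bool.or_eq_true, Bool.and_eq_true] at h1 h2 ⊢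
    rcases h1 with h1|h1
    · rcases h2 with h2|h2
      · exact Or.inl ⟨h1,h2⟩
      · exact Or.inr h2
    · exact Or.inr h1
end
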